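/- arXiv:2411.02665 — 3 statements merged into one kernel-verified Lean document; each statement's English description precedes it below -/
import Mathlib

section
/- Let A be a real m×n matrix and c ∈ ℝ^m with c ≠ 0, and let Δ > 0, ζ ∈ (0,1). Suppose v* minimizes ‖A v + c‖ over the ball ‖v‖ ≤ ζΔ. Then ‖c‖ - ‖A v* + c‖ ≥ (‖Aᵀc‖ / (2‖c‖)) · min( ζΔ , ‖Aᵀc‖ / ‖AᵀA‖ ), where ‖AᵀA‖ denotes the operator 2-norm. -/
/-!
Let `g = Aᵀc`, the gradient of `v ↦ ‖Av + c‖² / 2` at `0`, and `s = min (ζΔ) (‖g‖ / ‖AᵀA‖)`.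
Since `‖Ax‖² ≤ ‖AᵀA‖ ‖x‖²`, the step of length `s` from `0` along `-g` stays in the ball and
lowers `‖Av + c‖²` by at least `s ‖g‖`, hence so does the minimizer `v*`. Because `v = 0` is
feasible, `‖Av* + c‖ ≤ ‖c‖`, so `‖c‖² - ‖Av* + c‖² ≤ 2 ‖c‖ (‖c‖ - ‖Av* + c‖)`.
-/

open scoped InnerProduct

lemma div_two_mul_le_sub_of_sq_le_sq_sub {a b d : ℝ} (hb : 0 ≤ b) (hba : b ≤ a)
    (h : b ^ 2 ≤ a ^ 2 - d) : d / (2 * a) ≤ a - b := by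
  rcases (hb.trans hba).eq_or_lt with ha | ha
  · subst ha
    simp [le_antisymm hba hb]
  · rw [div_le_iff₀ (by positivity)]
    nlinarith

namespace ContinuousLinearMap

variable {E F : Type*} [NormedAddCommGroup E] [InnerProductSpace ℝ E] [CompleteSpace E]
  [NormedAddCommGroup F] [InnerProductSpace ℝ F] [CompleteSpace F]

lemma sq_norm_apply_le_norm_adjoint_comp_self_mul (A : E →L[ℝ] F) (x : E) :
    ‖A x‖ ^ 2 ≤ ‖A† ∘L A‖ * ‖x‖ ^ 2 :=
  calc ‖A x‖ ^ 2 ≤ (‖A‖ * ‖x‖) ^ 2 := by gcongr; exact A.le_opNorm x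
    _ = ‖A† ∘L A‖ * ‖x‖ ^ 2 := by rw [norm_adjoint_comp_self]; ring

lemma sq_norm_apply_smul_adjoint_add (A : E →L[ℝ] F) (c : F) (τ : ℝ) :
    ‖A (τ • (A†) c) + c‖ ^ 2 =
      ‖c‖ ^ 2 + 2 * τ * ‖(A†) c‖ ^ 2 + τ ^ 2 * ‖A ((A†) c)‖ ^ 2 := by
  have hinner : inner ℝ (A ((A†) c)) c = ‖(A†) c‖ ^ 2 := by
    rw [← adjoint_inner_right, real_inner_self_eq_norm_sq]
  rw [map_smul, norm_add_sq_real, norm_smul, real_inner_smul_left, hinner, mul_pow,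
    Real.norm_eq_abs, sq_abs]
  ring

noncomputable def cauchyPoint (A : E →L[ℝ] F) (c : F) (r : ℝ) : E :=
  -(min r (‖(A†) c‖ / ‖A† ∘L A‖) / ‖(A†) c‖) • (A†) c

variable (A : E →L[ℝ] F) (c : F) {r : ℝ}

lemma norm_cauchyPoint_le (hr : 0 ≤ r) : ‖A.cauchyPoint c r‖ ≤ r := by
  rcases eq_or_ne ((A†) c) 0 with hg | hg
  · simpa [cauchyPoint, hg] using hr
  rw [cauchyPoint, norm_smul, norm_neg, Real.norm_of_nonneg (by positivity),
    div_mul_cancel₀ _ (norm_ne_zero_iff.mpr hg)]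
  exact min_le_left _ _

lemma sq_norm_apply_cauchyPoint_add_le (hr : 0 ≤ r) :
    ‖A (A.cauchyPoint c r) + c‖ ^ 2 ≤ ‖c‖ ^ 2 - ‖(A†) c‖ * min r (‖(A†) c‖ / ‖A† ∘L A‖) := by
  rcases eq_or_ne ((A†) c) 0 with hg | hg
  · simp [cauchyPoint, hg]
  set g := (A†) c
  set B := ‖A† ∘L A‖
  set s := min r (‖g‖ / B)
  have hg_pos : 0 < ‖g‖ := norm_pos_iff.mpr hg
  have hs : 0 ≤ s := le_min hr (by positivity)
  have hsB : s * B ≤ ‖g‖ := mul_le_of_le_div₀ hg_pos.le (norm_nonneg _) (min_le_right _ _)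
  calc ‖A (A.cauchyPoint c r) + c‖ ^ 2
      = ‖c‖ ^ 2 - 2 * (s / ‖g‖) * ‖g‖ ^ 2 + (s / ‖g‖) ^ 2 * ‖A g‖ ^ 2 := by
        rw [cauchyPoint, sq_norm_apply_smul_adjoint_add]; ring
    _ ≤ ‖c‖ ^ 2 - 2 * (s / ‖g‖) * ‖g‖ ^ 2 + (s / ‖g‖) ^ 2 * (B * ‖g‖ ^ 2) := by
        gcongr; exact A.sq_norm_apply_le_norm_adjoint_comp_self_mul g
    _ = ‖c‖ ^ 2 - 2 * s * ‖g‖ + s * (s * B) := by field_simp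
    _ ≤ ‖c‖ ^ 2 - ‖g‖ * s := by linarith [mul_le_mul_of_nonneg_left hsB hs]

end ContinuousLinearMap

theorem stmt_2_general (m n : ℕ)
    (A : EuclideanSpace ℝ (Fin n) →L[ℝ] EuclideanSpace ℝ (Fin m))
    (c : EuclideanSpace ℝ (Fin m))
    (Δ ζ : ℝ)
    (v : EuclideanSpace ℝ (Fin n)) (hv : ‖v‖ ≤ ζ * Δ)
    (hopt : ∀ w : EuclideanSpace ℝ (Fin n), ‖w‖ ≤ ζ * Δ → ‖A v + c‖ ≤ ‖A w + c‖) :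
    ‖c‖ - ‖A v + c‖ ≥
      ‖(ContinuousLinearMap.adjoint A) c‖ / (2 * ‖c‖) *
        min (ζ * Δ)
          (‖(ContinuousLinearMap.adjoint A) c‖ /
            ‖(ContinuousLinearMap.adjoint A).comp A‖) := by
  have hr : 0 ≤ ζ * Δ := (norm_nonneg v).trans hv
  have hv_le_zero : ‖A v + c‖ ≤ ‖c‖ := by simpa using hopt 0 (by simpa using hr)
  have hv_le_cauchy : ‖A v + c‖ ≤ ‖A (A.cauchyPoint c (ζ * Δ)) + c‖ :=
    hopt _ (A.norm_cauchyPoint_le c hr)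
  rw [ge_iff_le, div_mul_eq_mul_div]
  refine div_two_mul_le_sub_of_sq_le_sq_sub (norm_nonneg _) hv_le_zero ?_
  exact (pow_le_pow_left₀ (norm_nonneg _) hv_le_cauchy 2).trans
    (A.sq_norm_apply_cauchyPoint_add_le c hr)

theorem stmt_2 (m n : ℕ)
    (A : EuclideanSpace ℝ (Fin n) →L[ℝ] EuclideanSpace ℝ (Fin m))
    (c : EuclideanSpace ℝ (Fin m)) (hc : c ≠ 0)
    (Δ ζ : ℝ) (hΔ : 0 < Δ) (hζ : ζ ∈ Set.Ioo (0:ℝ) 1)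
    (v : EuclideanSpace ℝ (Fin n)) (hv : ‖v‖ ≤ ζ * Δ)
    (hopt : ∀ w : EuclideanSpace ℝ (Fin n), ‖w‖ ≤ ζ * Δ → ‖A v + c‖ ≤ ‖A w + c‖) :
    ‖c‖ - ‖A v + c‖ ≥
      ‖(ContinuousLinearMap.adjoint A) c‖ / (2 * ‖c‖) *
        min (ζ * Δ)
          (‖(ContinuousLinearMap.adjoint A) c‖ /
            ‖(ContinuousLinearMap.adjoint A).comp A‖) :=
  stmt_2_general m n A c Δ ζ v hv hopt
end

section
/- Let c : ℝⁿ → ℝ^m be differentiable with L_c-Lipschitz Jacobian A(x) = ∇c(x), and let Ã = A(x) + δ_A, c̃ = c(x) + δ_c with ‖δ_A‖ ≤ ε_A, ‖δ_c‖ ≤ ε_c, and suppose ‖δ_c(x+p)‖ ≤ ε_c as well. Then for any p ∈ ℝⁿ, | ( ‖c̃(x)‖ - ‖c̃(x+p)‖ ) - ( ‖c̃(x)‖ - ‖Ãᵀp + c̃(x)‖ ) | ≤ (1/2) L_c ‖p‖² + ε_A‖p‖ + 2ε_c, where c̃(x+p) = c(x+p) + δ_c(x+p). -/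
/-!
The noise terms `δA p` and `δc - δc'` contribute `εA ‖p‖ + 2 εc` by the triangle inequality, so
everything rests on the second-order Taylor bound `‖c (x + p) - c x - A x p‖ ≤ Lc/2 ‖p‖²`. That
follows from the fencing form of the mean value theorem applied on `[0, 1]` to
`t ↦ c (x + t p) - c x - t A x p`, whose derivative `(A (x + t p) - A x) p` has norm at most
`Lc ‖p‖² t`, the derivative of the boundary `Lc/2 ‖p‖² t²`.
-/

section Taylor

variable {E F : Type*} [NormedAddCommGroup E] [NormedSpace ℝ E]
  [NormedAddCommGroup F] [NormedSpace ℝ F]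

theorem norm_sub_sub_fderiv_le_of_lipschitz_fderiv {f : E → F} {f' : E → E →L[ℝ] F} {L : ℝ}
    (x p : E) (hf : ∀ y, HasFDerivAt f (f' y) y) (hLip : ∀ y, ‖f' y - f' x‖ ≤ L * ‖y - x‖) :
    ‖f (x + p) - f x - f' x p‖ ≤ L / 2 * ‖p‖ ^ 2 := by
  let φ : ℝ → F := fun t => f (x + t • p) - f x - t • f' x p
  have hφ : ∀ t, HasDerivAt φ (f' (x + t • p) p - f' x p) t := by
    intro t
    have hline : HasDerivAt (fun s : ℝ => x + s • p) p t := by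
      simpa using ((hasDerivAt_id t).smul_const p).const_add x
    exact ((((hf (x + t • p)).comp_hasDerivAt t hline).sub_const (f x)).sub
      ((hasDerivAt_id t).smul_const (f' x p))).congr_deriv (by rw [one_smul])
  have hboundary : ∀ t, HasDerivAt (fun s : ℝ => L / 2 * ‖p‖ ^ 2 * s ^ 2) (L * ‖p‖ ^ 2 * t) t :=
    fun t => ((hasDerivAt_pow 2 t).const_mul _).congr_deriv (by norm_num; ring)
  have hslope : ∀ t ∈ Set.Ico (0 : ℝ) 1, ‖f' (x + t • p) p - f' x p‖ ≤ L * ‖p‖ ^ 2 * t := by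
    rintro t ⟨ht, -⟩
    calc ‖f' (x + t • p) p - f' x p‖ = ‖(f' (x + t • p) - f' x) p‖ := rfl
      _ ≤ ‖f' (x + t • p) - f' x‖ * ‖p‖ := ContinuousLinearMap.le_opNorm _ _
      _ ≤ L * ‖x + t • p - x‖ * ‖p‖ := by gcongr; exact hLip _
      _ = L * ‖p‖ ^ 2 * t := by
        rw [add_sub_cancel_left, norm_smul, Real.norm_of_nonneg ht]
        ring
  simpa [φ] using image_norm_le_of_norm_deriv_right_le_deriv_boundary (a := 0) (b := 1) (f := φ)
    (fun t _ => (hφ t).continuousAt.continuousWithinAt) (fun t _ => (hφ t).hasDerivWithinAt)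
    (by simp [φ]) hboundary hslope (Set.right_mem_Icc.2 zero_le_one)

end Taylor

theorem stmt_6 (n m : ℕ)
    (c : EuclideanSpace ℝ (Fin n) → EuclideanSpace ℝ (Fin m))
    (A : EuclideanSpace ℝ (Fin n) → (EuclideanSpace ℝ (Fin n) →L[ℝ] EuclideanSpace ℝ (Fin m)))
    (hA : ∀ x, HasFDerivAt c (A x) x)
    (Lc : ℝ) (hLip : ∀ x y, ‖A x - A y‖ ≤ Lc * ‖x - y‖)
    (x p : EuclideanSpace ℝ (Fin n))
    (δA : EuclideanSpace ℝ (Fin n) →L[ℝ] EuclideanSpace ℝ (Fin m))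
    (εA : ℝ) (hδA : ‖δA‖ ≤ εA)
    (δc δc' : EuclideanSpace ℝ (Fin m)) (εc : ℝ)
    (hδc : ‖δc‖ ≤ εc) (hδc' : ‖δc'‖ ≤ εc)
    (Atil : EuclideanSpace ℝ (Fin n) →L[ℝ] EuclideanSpace ℝ (Fin m))
    (hAtil : Atil = A x + δA)
    (ctx ctxp : EuclideanSpace ℝ (Fin m))
    (hctx : ctx = c x + δc) (hctxp : ctxp = c (x + p) + δc') :
    |(‖ctx‖ - ‖ctxp‖) - (‖ctx‖ - ‖Atil p + ctx‖)| ≤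
      (1/2) * Lc * ‖p‖^2 + εA * ‖p‖ + 2 * εc := by
  have htaylor := norm_sub_sub_fderiv_le_of_lipschitz_fderiv x p hA fun y => hLip y x
  have hδAp : ‖δA p‖ ≤ εA * ‖p‖ := δA.le_of_opNorm_le hδA p
  have hdecomp : Atil p + ctx - ctxp = -(c (x + p) - c x - A x p) + δA p + (δc - δc') := by
    rw [hAtil, hctx, hctxp, _root_.add_apply]
    abel
  calc |(‖ctx‖ - ‖ctxp‖) - (‖ctx‖ - ‖Atil p + ctx‖)| = |‖Atil p + ctx‖ - ‖ctxp‖| := by ring_nf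
    _ ≤ ‖Atil p + ctx - ctxp‖ := abs_norm_sub_norm_le _ _
    _ ≤ ‖c (x + p) - c x - A x p‖ + ‖δA p‖ + (‖δc‖ + ‖δc'‖) := by
      rw [hdecomp]
      refine (norm_add₃_le).trans ?_
      rw [norm_neg]
      gcongr
      exact norm_sub_le _ _
    _ ≤ (1/2) * Lc * ‖p‖^2 + εA * ‖p‖ + 2 * εc := by linarith
end

section
/- Let τ > 1 and suppose Δ : ℕ → ℝ is positive and satisfies: for every k ≥ K, if Δ_k ≤ Δ̄ then Δ_{k+1} = τ·Δ_k, and always Δ_{k+1} ∈ {τ·Δ_k, Δ_k/τ}. Then there exists K̂ ≥ K such that Δ_k > Δ̄/τ for all k ≥ K̂. -/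
theorem stmt_15 (τ Δbar : ℝ) (hτ : 1 < τ) (hΔbar : 0 < Δbar)
    (Δ : ℕ → ℝ) (hpos : ∀ k, 0 < Δ k) (K : ℕ)
    (hgrow : ∀ k, K ≤ k → Δ k ≤ Δbar → Δ (k+1) = τ * Δ k)
    (hupd : ∀ k, Δ (k+1) = τ * Δ k ∨ Δ (k+1) = Δ k / τ) :
    ∃ Khat, K ≤ Khat ∧ ∀ k, Khat ≤ k → Δ k > Δbar / τ := by
  have hτ0 : (0:ℝ) < τ := lt_trans one_pos hτ
  -- invariant: once above Δbar/τ (at index ≥ K), stays above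
  have step : ∀ k, K ≤ k → Δ k > Δbar / τ → Δ (k+1) > Δbar / τ := by
    intro k hk h
    by_cases hle : Δ k ≤ Δbar
    · rw [hgrow k hk hle]
      have h1 : Δbar / τ < Δbar := div_lt_self hΔbar hτ
      calc Δbar / τ < Δbar := h1
        _ < τ * Δ k := by
            have := (div_lt_iff₀ hτ0).mp h
            linarith [mul_comm τ (Δ k)]
    · rcases hupd k with h1 | h1
      · rw [h1]
        have : Δbar / τ < Δ k := h
        nlinarith [hpos k]
      · rw [h1]
        push_neg at hle
        gcongr
  -- find some k0 ≥ K with Δ k0 > Δbar/τ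
  have hexists : ∃ k0, K ≤ k0 ∧ Δ k0 > Δbar / τ := by
    by_contra hcon
    push_neg at hcon
    -- then for all n, Δ (K+n) = τ^n * Δ K
    have hgr : ∀ n, Δ (K + n) = τ ^ n * Δ K := by
      intro n
      induction n with
      | zero => simp
      | succ n ih =>
        have hle : Δ (K + n) ≤ Δbar := by
          have := hcon (K + n) (Nat.le_add_right K n)
          have : Δ (K + n) ≤ Δbar / τ := this
          calc Δ (K + n) ≤ Δbar / τ := this
            _ ≤ Δbar := le_of_lt (div_lt_self hΔbar hτ)
        have := hgrow (K + n) (Nat.le_add_right K n) hle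
        rw [show K + (n+1) = (K + n) + 1 from rfl, this, ih]
        ring
    obtain ⟨n, hn⟩ := pow_unbounded_of_one_lt (Δbar / τ / Δ K) hτ
    have hK0 := hpos K
    have h1 : Δ (K + n) ≤ Δbar / τ := hcon (K + n) (Nat.le_add_right K n)
    rw [hgr n] at h1
    have : Δbar / τ / Δ K < τ ^ n := hn
    have : Δbar / τ < τ ^ n * Δ K := (div_lt_iff₀ hK0).mp this
    linarith
  obtain ⟨k0, hk0K, hk0⟩ := hexists
  refine ⟨k0, hk0K, fun k hk => ?_⟩
  obtain ⟨m, rfl⟩ := Nat.exists_eq_add_of_le hk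
  induction m with
  | zero => simpa using hk0
  | succ m ih =>
    have hk' : k0 ≤ k0 + m := Nat.le_add_right _ _
    have := step (k0 + m) (le_trans hk0K hk') (ih hk')
    exact this
end
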